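/- Let {M_j} be a finite collection of Hermitian n×n matrices and suppose a nontrivial subspace V ⊆ ℂⁿ is minimal with respect to Span_ℝ{M_j}. Then there exists a positive semi-definite Hermitian matrix N with Ran(N) = V and Tr(M_jN) = 0 for all j; moreover, any nonzero positive semi-definite Hermitian N' with Ran(N') ⊆ V and Tr(M_jN') = 0 for all j satisfies Ran(N') = V. -/

import Mathlib

open Matrix
open scoped ComplexOrder

/-- Positive definite on a subspace `V ⊆ ℂⁿ`. -/
def PosDefOn {n : ℕ} (M : Matrix (Fin n) (Fin n) ℂ)
    (V : Submodule ℂ (Fin n → ℂ)) : Prop :=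
  ∀ v ∈ V, v ≠ 0 → 0 < (star v ⬝ᵥ (M *ᵥ v)).re

/-- `Span_ℝ {M j}` is indefinite on `V`. -/
def IndefiniteOn {n m : ℕ} (M : Fin m → Matrix (Fin n) (Fin n) ℂ)
    (V : Submodule ℂ (Fin n → ℂ)) : Prop :=
  ¬ ∃ a : Fin m → ℝ, PosDefOn (∑ j, a j • M j) V

/-!
If `N` is positive semidefinite, nonzero and trace-orthogonal to every `M j`, then no real
combination `A` of the `M j` can be positive definite on `Ran N`: writing `N = ∑ vᵢ vᵢᴴ` with
`vᵢ ∈ Ran N` gives `0 = Re tr (A N) = ∑ Re (vᵢᴴ A vᵢ) > 0`. So `Ran N` is an indefinite subspace,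
and minimality of `V` forces `Ran N = V` whenever `Ran N ≤ V`.

Conversely, if `V` is indefinite, the image of the compact convex set of trace-one positive
semidefinite matrices with range in `V` under `N ↦ (Re tr (M j N))ⱼ` contains `0`: otherwise a
separating functional `a` makes `∑ aⱼ Mⱼ` positive on every `v vᴴ` with `v ∈ V`.
A preimage `N` of `0` has `tr (M j N)` real, as both factors are Hermitian, hence zero.
-/

namespace Matrix

variable {n 𝕜 : Type*} [RCLike 𝕜]

theorem PosSemidef.norm_apply_sq_le {N : Matrix n n 𝕜} (hN : N.PosSemidef) (i j : n) :
    ‖N i j‖ ^ 2 ≤ RCLike.re (N i i) * RCLike.re (N j j) := by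
  have hdet := (hN.submatrix ![i, j]).det_nonneg
  have hii := (RCLike.nonneg_iff.mp (hN.diag_nonneg (i := i))).2
  have hjj := (RCLike.nonneg_iff.mp (hN.diag_nonneg (i := j))).2
  simp only [det_fin_two, submatrix_apply, cons_val_zero, cons_val_one] at hdet
  rw [← hN.isHermitian.apply i j, RCLike.star_def, RCLike.conj_mul, RCLike.nonneg_iff] at hdet
  have hminor := hdet.1
  simp only [map_sub, RCLike.mul_re, hii, hjj, mul_zero, sub_zero] at hminor
  norm_cast at hminor
  rw [← hN.isHermitian.apply i j, norm_star]
  linarith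

variable [Fintype n]

theorem PosSemidef.re_apply_self_le_re_trace {N : Matrix n n 𝕜} (hN : N.PosSemidef) (i : n) :
    RCLike.re (N i i) ≤ RCLike.re N.trace := by
  rw [trace, map_sum]
  exact Finset.single_le_sum (f := fun j => RCLike.re (N j j))
    (fun j _ => (RCLike.nonneg_iff.mp hN.diag_nonneg).1) (Finset.mem_univ i)

theorem isClosed_setOf_posSemidef : IsClosed {N : Matrix n n 𝕜 | N.PosSemidef} := by
  simp only [posSemidef_iff_dotProduct_mulVec, Set.ofPred_and, Set.ofPred_forall]
  exact (isClosed_eq (by fun_prop) continuous_id).inter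
    (isClosed_iInter fun x => isClosed_le continuous_const (by fun_prop))

theorem trace_mul_vecMulVec_star (A : Matrix n n 𝕜) (v : n → 𝕜) :
    (A * vecMulVec v (star v)).trace = star v ⬝ᵥ (A *ᵥ v) := by
  rw [mul_vecMulVec, trace_vecMulVec, dotProduct_comm]

theorem range_mulVecLin_conjTranspose_mul_self {m : Type*} [Fintype m] (B : Matrix m n 𝕜) :
    LinearMap.range (Bᴴ * B).mulVecLin = LinearMap.range Bᴴ.mulVecLin :=
  Submodule.eq_of_le_of_finrank_eq
    (by rw [mulVecLin_mul]; exact LinearMap.range_comp_le_range _ _)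
    ((rank_conjTranspose_mul_self B).trans (rank_conjTranspose B).symm)

theorem PosSemidef.exists_eq_sum_vecMulVec_mem_range {N : Matrix n n 𝕜} (hN : N.PosSemidef) :
    ∃ (k : ℕ) (v : Fin k → n → 𝕜), (∀ i, v i ∈ LinearMap.range N.mulVecLin) ∧
      N = ∑ i, vecMulVec (v i) (star (v i)) := by
  obtain ⟨k, v, rfl⟩ := posSemidef_iff_eq_sum_vecMulVec.mp hN
  let B : Matrix (Fin k) n 𝕜 := of fun i => star (v i)
  have hB : Bᴴ * B = ∑ i, vecMulVec (v i) (star (v i)) := by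
    ext a b
    simp [B, mul_apply, vecMulVec_apply, Matrix.sum_apply]
  refine ⟨k, v, fun i => ?_, rfl⟩
  rw [← hB, range_mulVecLin_conjTranspose_mul_self]
  exact ⟨Pi.single i 1, by ext a; simp [B]⟩

theorem PosSemidef.re_trace_mul_pos {A N : Matrix n n 𝕜} (hN : N.PosSemidef) (hN0 : N ≠ 0)
    (hA : ∀ v ∈ LinearMap.range N.mulVecLin, v ≠ 0 → 0 < RCLike.re (star v ⬝ᵥ (A *ᵥ v))) :
    0 < RCLike.re (A * N).trace := by
  obtain ⟨k, v, hv, rfl⟩ := hN.exists_eq_sum_vecMulVec_mem_range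
  obtain ⟨i, hi⟩ : ∃ i, v i ≠ 0 := by
    by_contra! h
    simp [h] at hN0
  simp only [Finset.mul_sum, trace_sum, trace_mul_vecMulVec_star, map_sum]
  refine Finset.sum_pos' (fun j _ => ?_) ⟨i, Finset.mem_univ _, hA _ (hv i) hi⟩
  obtain h | h := eq_or_ne (v j) 0
  · simp [h]
  · exact (hA _ (hv j) h).le

theorem re_trace_sum_smul_mul {ι : Type*} [Fintype ι] (a : ι → ℝ) (M : ι → Matrix n n 𝕜)
    (N : Matrix n n 𝕜) :
    RCLike.re ((∑ j, a j • M j) * N).trace = ∑ j, a j * RCLike.re (M j * N).trace := by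
  simp [Finset.sum_mul, trace_sum, smul_mul, trace_smul, RCLike.smul_re]

theorem IsHermitian.ofReal_re_trace_mul {A B : Matrix n n 𝕜} (hA : A.IsHermitian)
    (hB : B.IsHermitian) : (RCLike.re (A * B).trace : 𝕜) = (A * B).trace := by
  rw [← RCLike.conj_eq_iff_re, starRingEnd_apply, ← trace_conjTranspose, conjTranspose_mul,
    hA.eq, hB.eq, trace_mul_comm]

end Matrix

section DensityMatrices

variable {n 𝕜 : Type*} [Fintype n] [RCLike 𝕜]

def densityMatricesOn (V : Submodule 𝕜 (n → 𝕜)) : Set (Matrix n n 𝕜) :=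
  {N | N.PosSemidef ∧ LinearMap.range N.mulVecLin ≤ V ∧ N.trace = 1}

variable (V : Submodule 𝕜 (n → 𝕜))

theorem convex_densityMatricesOn : Convex ℝ (densityMatricesOn V) := by
  rintro A ⟨hA, hAV, hAtr⟩ B ⟨hB, hBV, hBtr⟩ a b ha hb hab
  refine ⟨(hA.smul ha).add (hB.smul hb), ?_, ?_⟩
  · rintro _ ⟨x, rfl⟩
    simp only [mulVecLin_apply, add_mulVec, smul_mulVec]
    exact V.add_mem (V.smul_of_tower_mem a (hAV ⟨x, rfl⟩)) (V.smul_of_tower_mem b (hBV ⟨x, rfl⟩))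
  · rw [trace_add, trace_smul, trace_smul, hAtr, hBtr, ← add_smul, hab, one_smul]

theorem isClosed_densityMatricesOn : IsClosed (densityMatricesOn V) := by
  have hsplit : densityMatricesOn V =
      {N | N.PosSemidef} ∩ (⋂ x, (· *ᵥ x) ⁻¹' V) ∩ {N | N.trace = 1} := by
    ext N
    simp [densityMatricesOn, SetLike.le_def, and_assoc]
  rw [hsplit]
  exact (isClosed_setOf_posSemidef.inter (isClosed_iInter fun x =>
    V.closed_of_finiteDimensional.preimage (by fun_prop))).inter
    (isClosed_eq (by fun_prop) continuous_const)

theorem isCompact_densityMatricesOn : IsCompact (densityMatricesOn V) := by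
  refine (isCompact_univ_pi fun _ => isCompact_univ_pi fun _ =>
    isCompact_closedBall (0 : 𝕜) 1).of_isClosed_subset (isClosed_densityMatricesOn V) ?_
  rintro N ⟨hN, -, htr⟩ i - j -
  have hle k : RCLike.re (N k k) ≤ 1 := by simpa [htr] using hN.re_apply_self_le_re_trace k
  have hnn k : 0 ≤ RCLike.re (N k k) := (RCLike.nonneg_iff.mp hN.diag_nonneg).1
  rw [mem_closedBall_zero_iff, ← sq_le_one_iff₀ (norm_nonneg _)]
  exact (hN.norm_apply_sq_le i j).trans (mul_le_one₀ (hle i) (hnn j) (hle j))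

theorem exists_smul_vecMulVec_mem_densityMatricesOn {v : n → 𝕜} (hv : v ∈ V) (hv0 : v ≠ 0) :
    ∃ t : ℝ, 0 < t ∧ t • vecMulVec v (star v) ∈ densityMatricesOn V := by
  obtain ⟨r, hr, hrv⟩ := RCLike.pos_iff_exists_ofReal.mp (dotProduct_star_self_pos_iff.mpr hv0)
  refine ⟨r⁻¹, inv_pos.mpr hr, (posSemidef_vecMulVec_self_star v).smul (inv_pos.mpr hr).le, ?_, ?_⟩
  · rintro _ ⟨x, rfl⟩
    simp only [mulVecLin_apply, smul_mulVec, vecMulVec_mulVec, op_smul_eq_smul]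
    exact V.smul_of_tower_mem _ (V.smul_mem _ hv)
  · rw [trace_smul, trace_vecMulVec, dotProduct_comm, ← hrv, RCLike.real_smul_eq_coe_mul,
      ← RCLike.ofReal_mul, inv_mul_cancel₀ hr.ne', RCLike.ofReal_one]

end DensityMatrices

theorem exists_dotProduct_pos_of_zero_notMem {ι : Type*} [Fintype ι] {K : Set (ι → ℝ)}
    (hconv : Convex ℝ K) (hclosed : IsClosed K) (h0 : 0 ∉ K) :
    ∃ a : ι → ℝ, ∀ x ∈ K, 0 < a ⬝ᵥ x := by
  classical
  obtain ⟨f, u, hf0, hfK⟩ := geometric_hahn_banach_point_closed hconv hclosed h0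
  refine ⟨fun i => f fun j => if i = j then 1 else 0, fun x hx => ?_⟩
  have hfx : f x = (fun i => f fun j => if i = j then 1 else 0) ⬝ᵥ x := by
    rw [dotProduct_comm]
    exact LinearMap.pi_apply_eq_sum_univ f.toLinearMap x
  rw [map_zero] at hf0
  linarith [hfK x hx]

section IndefiniteOn

variable {n m : ℕ} {M : Fin m → Matrix (Fin n) (Fin n) ℂ}

theorem indefiniteOn_range_of_trace_mul_eq_zero {N : Matrix (Fin n) (Fin n) ℂ}
    (hN : N.PosSemidef) (hN0 : N ≠ 0) (htr : ∀ j, (M j * N).trace = 0) :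
    IndefiniteOn M (LinearMap.range N.mulVecLin) := by
  rintro ⟨a, ha⟩
  have hpos := hN.re_trace_mul_pos hN0 ha
  simp [re_trace_sum_smul_mul, htr] at hpos

theorem range_eq_of_trace_mul_eq_zero {V : Submodule ℂ (Fin n → ℂ)}
    (hmin : ∀ W : Submodule ℂ (Fin n → ℂ), W ≠ ⊥ → W < V → ¬ IndefiniteOn M W)
    {N : Matrix (Fin n) (Fin n) ℂ} (hN : N.PosSemidef) (hN0 : N ≠ 0)
    (hNV : LinearMap.range N.mulVecLin ≤ V) (htr : ∀ j, (M j * N).trace = 0) :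
    LinearMap.range N.mulVecLin = V := by
  have hne : LinearMap.range N.mulVecLin ≠ ⊥ := by
    rwa [Ne, LinearMap.range_eq_bot, ← toLin'_apply', LinearEquiv.map_eq_zero_iff]
  exact hNV.eq_of_not_lt fun hlt =>
    hmin _ hne hlt (indefiniteOn_range_of_trace_mul_eq_zero hN hN0 htr)

theorem exists_posSemidef_trace_mul_eq_zero_of_indefiniteOn (hM : ∀ j, (M j).IsHermitian)
    {V : Submodule ℂ (Fin n → ℂ)} (hV : IndefiniteOn M V) :
    ∃ N : Matrix (Fin n) (Fin n) ℂ, N.PosSemidef ∧ N ≠ 0 ∧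
      LinearMap.range N.mulVecLin ≤ V ∧ ∀ j, (M j * N).trace = 0 := by
  let φ : Matrix (Fin n) (Fin n) ℂ →ₗ[ℝ] Fin m → ℝ := LinearMap.pi fun j =>
    Complex.reLm ∘ₗ (traceLinearMap (Fin n) ℂ ℂ).restrictScalars ℝ ∘ₗ
      (LinearMap.mulLeft ℂ (M j)).restrictScalars ℝ
  obtain ⟨N, ⟨hN, hNV, hNtr⟩, hφN⟩ : (0 : Fin m → ℝ) ∈ φ '' densityMatricesOn V := by
    by_contra h0
    obtain ⟨a, ha⟩ := exists_dotProduct_pos_of_zero_notMem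
      ((convex_densityMatricesOn V).linear_image φ)
      ((isCompact_densityMatricesOn V).image φ.continuous_of_finiteDimensional).isClosed h0
    refine hV ⟨a, fun v hv hv0 => ?_⟩
    obtain ⟨t, ht, htv⟩ := exists_smul_vecMulVec_mem_densityMatricesOn V hv hv0
    have hφv : a ⬝ᵥ φ (t • vecMulVec v (star v)) =
        t * (star v ⬝ᵥ ((∑ j, a j • M j) *ᵥ v)).re := by
      rw [map_smul, dotProduct_smul, smul_eq_mul, ← trace_mul_vecMulVec_star,
        ← RCLike.re_to_complex, re_trace_sum_smul_mul]
      rfl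
    exact pos_of_mul_pos_right (hφv ▸ ha _ ⟨_, htv, rfl⟩) ht.le
  refine ⟨N, hN, fun h => by simp [h] at hNtr, hNV, fun j => ?_⟩
  rw [← (hM j).ofReal_re_trace_mul hN.isHermitian,
    show RCLike.re (M j * N).trace = 0 from congrFun hφN j, RCLike.ofReal_zero]

end IndefiniteOn

theorem minimal_subspace_psd_range_general {n m : ℕ}
    (M : Fin m → Matrix (Fin n) (Fin n) ℂ) (hM : ∀ j, (M j).IsHermitian)
    (V : Submodule ℂ (Fin n → ℂ))
    (hmin : IndefiniteOn M V ∧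
      ∀ W : Submodule ℂ (Fin n → ℂ), W ≠ ⊥ → W < V → ¬ IndefiniteOn M W) :
    (∃ N : Matrix (Fin n) (Fin n) ℂ, N.PosSemidef ∧
      LinearMap.range N.mulVecLin = V ∧ ∀ j, (M j * N).trace = 0) ∧
    (∀ N' : Matrix (Fin n) (Fin n) ℂ, N'.PosSemidef → N' ≠ 0 →
      LinearMap.range N'.mulVecLin ≤ V → (∀ j, (M j * N').trace = 0) →
      LinearMap.range N'.mulVecLin = V) := by
  obtain ⟨hindef, hminimal⟩ := hmin
  obtain ⟨N, hN, hN0, hNV, htr⟩ := exists_posSemidef_trace_mul_eq_zero_of_indefiniteOn hM hindef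
  exact ⟨⟨N, hN, range_eq_of_trace_mul_eq_zero hminimal hN hN0 hNV htr, htr⟩,
    fun _ => range_eq_of_trace_mul_eq_zero hminimal⟩

/-- Lemma 4.3 + Lemma 4.5: if `V` is minimal with respect to `Span_ℝ {M j}`,
then there is a PSD matrix `N` with `Ran(N) = V` orthogonal to all `M j`;
moreover every nonzero PSD matrix `N'` with range in `V` orthogonal to all
`M j` has range equal to `V`. -/
theorem minimal_subspace_psd_range {n m : ℕ}
    (M : Fin m → Matrix (Fin n) (Fin n) ℂ) (hM : ∀ j, (M j).IsHermitian)
    (V : Submodule ℂ (Fin n → ℂ)) (hV : V ≠ ⊥)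
    (hmin : IndefiniteOn M V ∧
      ∀ W : Submodule ℂ (Fin n → ℂ), W ≠ ⊥ → W < V → ¬ IndefiniteOn M W) :
    (∃ N : Matrix (Fin n) (Fin n) ℂ, N.PosSemidef ∧
      LinearMap.range N.mulVecLin = V ∧ ∀ j, (M j * N).trace = 0) ∧
    (∀ N' : Matrix (Fin n) (Fin n) ℂ, N'.PosSemidef → N' ≠ 0 →
      LinearMap.range N'.mulVecLin ≤ V → (∀ j, (M j * N').trace = 0) →
      LinearMap.range N'.mulVecLin = V) :=
  minimal_subspace_psd_range_general M hM V hmin
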